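/- arXiv:0909.0715 — 6 statements merged into one kernel-verified Lean document; each statement's English description precedes it below -/
import Mathlib

section
/- Let p = p_n be the n-th prime with n > 1, and let m be such that p_m < p/2 < p_{m+1}. If the open interval (p, 2·p_{m+1}) contains a prime, then all integers strictly between p/2 and p_{n+1}/2 are composite (i.e., there is no prime q with p/2 < q < p_{n+1}/2). -/
/-- The n-th prime, 1-indexed: p 1 = 2, p 2 = 3, ... -/
noncomputable def p (n : ℕ) : ℕ := Nat.nth Nat.Prime (n - 1)

lemma next_prime_le (a r : ℕ) (hr : r.Prime) (h : Nat.nth Nat.Prime a < r) :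
    Nat.nth Nat.Prime (a + 1) ≤ r := by
  have hc : Nat.nth Nat.Prime (Nat.count Nat.Prime r) = r := Nat.nth_count hr
  rw [← hc] at h
  have hak : a < Nat.count Nat.Prime r :=
    (Nat.nth_lt_nth Nat.infinite_setOf_prime).mp h
  have h3 : Nat.nth Nat.Prime (a + 1) ≤ Nat.nth Nat.Prime (Nat.count Nat.Prime r) :=
    (Nat.nth_le_nth Nat.infinite_setOf_prime).mpr hak
  rwa [hc] at h3

theorem stmt_1 (n m : ℕ) (hn : 1 < n)
    (h1 : (p m : ℝ) < (p n : ℝ) / 2) (h2 : (p n : ℝ) / 2 < (p (m + 1) : ℝ))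
    (hex : ∃ q : ℕ, q.Prime ∧ p n < q ∧ q < 2 * p (m + 1)) :
    ¬ ∃ q : ℕ, q.Prime ∧ (p n : ℝ) / 2 < (q : ℝ) ∧ (q : ℝ) < (p (n + 1) : ℝ) / 2 := by
  rintro ⟨q, hq, hq1, hq2⟩
  obtain ⟨r, hr, hr1, hr2⟩ := hex
  -- q > p m
  have hpmq : p m < q := by
    have : (p m : ℝ) < (q : ℝ) := lt_trans h1 hq1
    exact_mod_cast this
  -- q ≥ p (m+1)
  have hq_ge : p (m + 1) ≤ q := by
    rcases Nat.eq_zero_or_pos m with hm | hm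
    · subst hm
      have hc2 : Nat.count Nat.Prime 2 = 0 := by decide
      have h2le := hq.two_le
      have : p (0 + 1) = 2 := by
        have := Nat.nth_count Nat.prime_two
        rw [hc2] at this
        simpa [p] using this
      omega
    · have : p m = Nat.nth Nat.Prime (m - 1) := rfl
      have h := next_prime_le (m - 1) q hq (by exact hpmq)
      have hm1 : m - 1 + 1 = m := by omega
      rw [hm1] at h
      exact h
  -- 2q < p (n+1)
  have h2q : 2 * q < p (n + 1) := by
    have : (2 * q : ℝ) < (p (n + 1) : ℝ) := by push_cast; linarith
    exact_mod_cast this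
  -- r < p (n+1)
  have hrlt : r < p (n + 1) := by omega
  -- r ≥ p (n+1)
  have hge : p (n + 1) ≤ r := by
    have h := next_prime_le (n - 1) r hr hr1
    have hn1 : n - 1 + 1 = n := by omega
    rw [hn1] at h
    have : p (n + 1) = Nat.nth Nat.Prime n := by simp [p]
    omega
  omega
end

section
/- If p is an odd Ramanujan prime and p = p_m is the m-th prime, then there is no prime q with p_m/2 < q < p_{m+1}/2; equivalently, all integers (p_m+1)/2, (p_m+3)/2, ..., (p_{m+1}−1)/2 are composite. -/
/-- Prime counting function extended to real arguments. -/
noncomputable def piR (x : ℝ) : ℕ := Nat.primeCounting ⌊x⌋₊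

/-- `q` is a Ramanujan prime: `q = R_n` for some `n ≥ 1`. -/
def IsRamanujan (q : ℕ) : Prop :=
  ∃ n : ℕ, 1 ≤ n ∧ IsLeast {R : ℕ | 0 < R ∧ ∀ x : ℝ, (R : ℝ) ≤ x →
    n ≤ piR x - piR (x / 2)} q

lemma pi_nth (k : ℕ) : Nat.primeCounting (Nat.nth Nat.Prime k) = k + 1 := by
  rw [Nat.primeCounting, Nat.primeCounting', Nat.count_succ,
    Nat.count_nth_of_infinite Nat.infinite_setOf_prime,
    if_pos (Nat.prime_nth_prime k)]

lemma pi_nth_sub_one (k : ℕ) :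
    Nat.primeCounting (Nat.nth Nat.Prime k - 1) = k := by
  have h2 : 2 ≤ Nat.nth Nat.Prime k := (Nat.prime_nth_prime k).two_le
  rw [Nat.primeCounting, Nat.primeCounting',
    show Nat.nth Nat.Prime k - 1 + 1 = Nat.nth Nat.Prime k by omega,
    Nat.count_nth_of_infinite Nat.infinite_setOf_prime]

theorem stmt_7 (m : ℕ) (hm : 1 ≤ m) (hodd : Odd (p m)) (hram : IsRamanujan (p m)) :
    ¬ ∃ q : ℕ, q.Prime ∧ (p m : ℝ) / 2 < (q : ℝ) ∧ (q : ℝ) < (p (m + 1) : ℝ) / 2 := by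
  rintro ⟨q, hq, hq1, hq2⟩
  obtain ⟨n, hn1, ⟨⟨hpos, hall⟩, hlb⟩⟩ := hram
  have hpmprime : (p m).Prime := Nat.prime_nth_prime (m - 1)
  have hpm2 : 2 ≤ p m := hpmprime.two_le
  have hpm3 : 3 ≤ p m := by
    have hne : p m ≠ 2 := by
      intro h
      rw [h] at hodd
      rw [Nat.odd_iff] at hodd
      omega
    omega
  have hpm3r : (3 : ℝ) ≤ (p m : ℝ) := by exact_mod_cast hpm3
  obtain ⟨k, hk⟩ := hodd
  -- basic prime counting values
  have hπpm : Nat.primeCounting (p m) = m := by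
    rw [p, pi_nth]; omega
  have hπpm1 : Nat.primeCounting (p m - 1) = m - 1 := by
    rw [p, pi_nth_sub_one]
  have hπpm1' : Nat.primeCounting (p (m+1) - 1) = m := by
    rw [p, pi_nth_sub_one]; omega
  -- q bounds in ℕ
  have hq1' : p m < 2 * q := by
    have : (p m : ℝ) < 2 * q := by linarith
    exact_mod_cast this
  have hq2' : 2 * q < p (m + 1) := by
    have : (2 * q : ℝ) < p (m + 1) := by linarith
    exact_mod_cast this
  -- π(2q) = m
  have hπ2q : Nat.primeCounting (2 * q) = m := by
    have h1 : Nat.primeCounting (p m) ≤ Nat.primeCounting (2 * q) :=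
      Nat.monotone_primeCounting (by omega)
    have h2 : Nat.primeCounting (2 * q) ≤ Nat.primeCounting (p (m+1) - 1) :=
      Nat.monotone_primeCounting (by omega)
    omega
  -- π(q) ≥ π(k) + 1
  have hqk : k < q := by
    have : (k : ℝ) < q := by
      have : (p m : ℝ) = 2 * k + 1 := by exact_mod_cast congrArg (Nat.cast : ℕ → ℝ) hk
      linarith
    exact_mod_cast this
  have hπq : Nat.primeCounting k + 1 ≤ Nat.primeCounting q := by
    have h1 : Nat.primeCounting k ≤ Nat.count Nat.Prime q := by
      rw [Nat.primeCounting, Nat.primeCounting']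
      exact Nat.count_monotone _ (by omega)
    have h2 : Nat.primeCounting q = Nat.count Nat.Prime q + 1 := by
      rw [Nat.primeCounting, Nat.primeCounting', Nat.count_succ, if_pos hq]
    omega
  -- apply the Ramanujan property at x = 2q
  have h2q : n ≤ Nat.primeCounting (2 * q) - Nat.primeCounting q := by
    have := hall ((2 * q : ℕ) : ℝ) (by exact_mod_cast hq1'.le)
    have e1 : piR ((2 * q : ℕ) : ℝ) = Nat.primeCounting (2 * q) := by
      rw [piR, Nat.floor_natCast]
    have e2 : piR (((2 * q : ℕ) : ℝ) / 2) = Nat.primeCounting q := by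
      rw [piR, show ((2 * q : ℕ) : ℝ) / 2 = (q : ℕ) by push_cast; ring,
        Nat.floor_natCast]
    rwa [e1, e2] at this
  -- p m - 1 is not in the set, giving a failing x
  have hnotmem : (p m - 1) ∉ {R : ℕ | 0 < R ∧ ∀ x : ℝ, (R : ℝ) ≤ x →
      n ≤ piR x - piR (x / 2)} := by
    intro h
    have := hlb h
    omega
  simp only [Set.mem_setOf_eq, not_and, not_forall] at hnotmem
  obtain ⟨x, hx1, hx2⟩ := hnotmem (by omega)
  rw [not_le] at hx2
  -- x < p m, otherwise hall applies
  have hxlt : x < (p m : ℝ) := by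
    by_contra h
    rw [not_lt] at h
    exact absurd (hall x h) (by omega)
  have hxge : ((p m - 1 : ℕ) : ℝ) ≤ x := hx1
  have hcast : ((p m - 1 : ℕ) : ℝ) = (p m : ℝ) - 1 := by
    push_cast [Nat.cast_sub (by omega : 1 ≤ p m)]; ring
  -- floors of x and x/2
  have hfx : ⌊x⌋₊ = p m - 1 := by
    rw [Nat.floor_eq_iff (by rw [hcast] at hxge; linarith)]
    constructor
    · exact hxge
    · rw [hcast]; linarith
  have hpmr : (p m : ℝ) = 2 * k + 1 := by exact_mod_cast congrArg (Nat.cast : ℕ → ℝ) hk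
  have hfx2 : ⌊x / 2⌋₊ = k := by
    rw [Nat.floor_eq_iff (by rw [hcast] at hxge; linarith)]
    constructor
    · rw [hcast] at hxge; rw [hpmr] at hxge; linarith
    · rw [hpmr] at hxlt; linarith
  rw [piR, piR, hfx, hfx2, hπpm1] at hx2
  have key : (m - 1) - Nat.primeCounting k < n := hx2
  clear * - key h2q hπ2q hπq hn1 hm hπpm1 hπpm
  -- π k relation: p m - 1 = 2k, so π(p m - 1) ≥ π k … use monotonicity
  have hπk : Nat.primeCounting k ≤ m - 1 := by
    rw [← hπpm1]
    exact Nat.monotone_primeCounting (by omega)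
  omega
end

section
/- If p is an odd Ramanujan prime, p_m < p/2 < p_{m+1} for consecutive primes p_m, p_{m+1}, then the interval (p, 2·p_{m+1}) contains a prime. -/
lemma arith_aux (n m A B C : ℕ) (hn : 1 ≤ n) (h1 : B - m < n)
    (h2 : n ≤ C - (m + 1)) (h3 : A ≤ B + 1) : A < C := by omega

theorem stmt_8 (q m : ℕ) (hm : 1 ≤ m) (hodd : Odd q) (hram : IsRamanujan q)
    (h1 : (p m : ℝ) < (q : ℝ) / 2) (h2 : (q : ℝ) / 2 < (p (m + 1) : ℝ)) :
    ∃ r : ℕ, r.Prime ∧ q < r ∧ r < 2 * p (m + 1) := by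
  obtain ⟨n, hn, ⟨⟨hq0, hqall⟩, hlb⟩⟩ := hram
  obtain ⟨k, hk⟩ := hodd
  have hinf := Nat.infinite_setOf_prime
  have hPprime : (p (m + 1)).Prime := Nat.nth_mem_of_infinite hinf m
  have hpm_prime : (p m).Prime := Nat.nth_mem_of_infinite hinf (m - 1)
  set P := p (m + 1) with hP
  -- basic integer bounds
  have hpmk : p m ≤ k := by
    have : (p m : ℝ) < k + 1 := by
      rw [hk] at h1; push_cast at h1; linarith
    exact_mod_cast Nat.lt_succ_iff.mp (by exact_mod_cast this)
  have hkP : k < P := by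
    have : (k : ℝ) < P := by
      rw [hk] at h2; push_cast at h2; linarith
    exact_mod_cast this
  have hk2 : 2 ≤ k := le_trans hpm_prime.two_le hpmk
  -- count (k+1) = m
  have hnthm : Nat.nth Nat.Prime m = P := by rw [hP]; rfl
  have hnthm1 : Nat.nth Nat.Prime (m - 1) = p m := rfl
  have hcount_k : Nat.count Nat.Prime (k + 1) = m := by
    have hle : Nat.count Nat.Prime (k + 1) ≤ m := by
      rw [Nat.count_le_iff_le_nth hinf, hnthm]; omega
    have hge : m - 1 < Nat.count Nat.Prime (k + 1) := by
      rw [Nat.lt_nth_iff_count_lt hinf, hnthm1]; omega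
    omega
  -- membership at x = 2P
  have h2P : n ≤ Nat.count Nat.Prime (2 * P + 1) - (m + 1) := by
    have hx : (q : ℝ) ≤ ((2 * P : ℕ) : ℝ) := by push_cast; linarith
    have := hqall ((2 * P : ℕ) : ℝ) hx
    have e1 : piR ((2 * P : ℕ) : ℝ) = Nat.count Nat.Prime (2 * P + 1) := by
      rw [piR, Nat.floor_natCast]; rfl
    have e2 : piR (((2 * P : ℕ) : ℝ) / 2) = Nat.count Nat.Prime (P + 1) := by
      have : ((2 * P : ℕ) : ℝ) / 2 = (P : ℝ) := by push_cast; ring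
      simp [piR, this, Nat.primeCounting, Nat.primeCounting']
    have e3 : Nat.count Nat.Prime (P + 1) = m + 1 := by
      have := Nat.count_nth_succ (p := Nat.Prime) (n := m)
        (fun hf => absurd hf hinf)
      rwa [hnthm] at this
    rwa [e1, e2, e3] at this
  -- minimality : q - 1 (= 2k) not in the set
  have hnotmem : ¬ (0 < 2 * k ∧ ∀ x : ℝ, ((2 * k : ℕ) : ℝ) ≤ x →
      n ≤ piR x - piR (x / 2)) := by
    intro hmem
    have := hlb hmem
    omega
  push_neg at hnotmem
  obtain ⟨x, hx1, hx2⟩ := hnotmem (by omega)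
  have hxlt : x < q := by
    by_contra hge
    push_neg at hge
    exact absurd (hqall x hge) (by omega)
  -- floors at x ∈ [2k, 2k+1)
  have hxq : x < 2 * k + 1 := by rw [hk] at hxlt; exact_mod_cast hxlt
  have hx0 : ((2 * k : ℕ) : ℝ) ≤ x := hx1
  have hfx : ⌊x⌋₊ = 2 * k := by
    rw [Nat.floor_eq_iff (le_trans (by positivity) hx0)]
    constructor
    · exact_mod_cast hx0
    · push_cast at hxq ⊢; linarith
  have hx00 : (0:ℝ) ≤ x := le_trans (by positivity) hx0
  have hfx2 : ⌊x / 2⌋₊ = k := by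
    rw [Nat.floor_eq_iff (by linarith : (0:ℝ) ≤ x / 2)]
    push_cast at hx0 hxq ⊢
    constructor <;> [linarith; linarith]
  have hlow : Nat.count Nat.Prime (2 * k + 1) - Nat.count Nat.Prime (k + 1) < n := by
    simpa [piR, hfx, hfx2, Nat.primeCounting, Nat.primeCounting'] using hx2
  -- counts around q
  have hstep : Nat.count Nat.Prime (2 * k + 2) ≤ Nat.count Nat.Prime (2 * k + 1) + 1 := by
    rw [Nat.count_succ]; split <;> omega
  -- conclusion: count (q+1) < count (2P+1)
  rw [hcount_k] at hlow
  have hkey : Nat.count Nat.Prime (2 * k + 2) < Nat.count Nat.Prime (2 * P + 1) :=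
    arith_aux n m _ _ _ hn hlow h2P hstep
  set c := Nat.count Nat.Prime (2 * k + 2) with hc
  refine ⟨Nat.nth Nat.Prime c, Nat.nth_mem_of_infinite hinf c, ?_, ?_⟩
  · have : 2 * k + 2 ≤ Nat.nth Nat.Prime c :=
      (Nat.count_le_iff_le_nth hinf).mp le_rfl
    omega
  · have hlt : Nat.nth Nat.Prime c < 2 * P + 1 :=
      (Nat.lt_nth_iff_count_lt hinf).mp hkey
    have hne : Nat.nth Nat.Prime c ≠ 2 * P := by
      intro he
      have hpr : (Nat.nth Nat.Prime c).Prime := Nat.nth_mem_of_infinite hinf c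
      rw [he] at hpr
      have := (Nat.Prime.even_iff hpr).mp ⟨P, by ring⟩
      have := hPprime.two_le
      omega
    omega
end

section
/- The Labos prime L_n is well-defined and prime for every n ≥ 1: there exists a smallest positive integer L such that π(L) − π(L/2) = n, and this L is prime. -/
open Nat

theorem myCB (n : ℕ) (hn : 0 < n) :
    centralBinom n ≤ (2 * n) ^ Nat.primeCounting (2 * n) := by
  have h0 : centralBinom n ≠ 0 := (centralBinom_pos n).ne'
  have hfac := Nat.factorization_prod_pow_eq_self h0
  have hsub : (centralBinom n).primeFactors ⊆
      Finset.filter Nat.Prime (Finset.range (2 * n + 1)) := by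
    intro p hp
    rw [Nat.mem_primeFactors] at hp
    have hp1 : p ^ (centralBinom n).factorization p ≤ 2 * n :=
      Nat.pow_factorization_choose_le (by omega)
    have hpos : 0 < (centralBinom n).factorization p :=
      hp.1.factorization_pos_of_dvd h0 hp.2.1
    have hple : p ≤ 2 * n := by
      calc p = p ^ 1 := (pow_one p).symm
        _ ≤ p ^ (centralBinom n).factorization p :=
          Nat.pow_le_pow_right hp.1.one_lt.le hpos
        _ ≤ 2 * n := hp1
    simp [Finset.mem_filter, Finset.mem_range, hp.1]
    omega
  calc centralBinom n
      = ∏ p ∈ (centralBinom n).primeFactors,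
          p ^ (centralBinom n).factorization p := by
        rw [← Nat.support_factorization]; exact hfac.symm
    _ ≤ ∏ _p ∈ (centralBinom n).primeFactors, 2 * n :=
        Finset.prod_le_prod' fun p hp =>
          Nat.pow_factorization_choose_le (by omega)
    _ = (2 * n) ^ (centralBinom n).primeFactors.card := Finset.prod_const _
    _ ≤ (2 * n) ^ (Finset.filter Nat.Prime (Finset.range (2 * n + 1))).card :=
        Nat.pow_le_pow_right (by omega) (Finset.card_le_card hsub)
    _ = (2 * n) ^ Nat.primeCounting (2 * n) := by
        rw [Nat.primeCounting, Nat.primeCounting', Nat.count_eq_card_filter_range]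

theorem myLB (n : ℕ) (hn : 0 < n) :
    4 ^ n ≤ (2 * n) ^ (Nat.primeCounting (2 * n) + 1) := by
  calc 4 ^ n ≤ 2 * n * centralBinom n :=
        Nat.four_pow_le_two_mul_self_mul_centralBinom n hn
    _ ≤ 2 * n * (2 * n) ^ Nat.primeCounting (2 * n) :=
        Nat.mul_le_mul_left _ (myCB n hn)
    _ = (2 * n) ^ (Nat.primeCounting (2 * n) + 1) := by ring

/-- The count of primes in (L/2, L]. -/
def myF (L : ℕ) : ℕ := Nat.primeCounting L - Nat.primeCounting (L / 2)

theorem myF_step (k : ℕ) : myF (k + 1) ≤ myF k + 1 := by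
  have h1 : Nat.primeCounting (k + 1) ≤ Nat.primeCounting k + 1 := by
    rw [Nat.primeCounting, Nat.primeCounting, Nat.primeCounting']
    rw [Nat.count_succ]
    split <;> omega
  have h2 : Nat.primeCounting (k / 2) ≤ Nat.primeCounting ((k + 1) / 2) :=
    Nat.monotone_primeCounting (by omega)
  unfold myF; omega

theorem cube_lt (k : ℕ) (hk : 10 ≤ k) : k ^ 3 < 2 ^ k := by
  induction k, hk using Nat.le_induction with
  | base => norm_num
  | succ k hk ih =>
    have h : (k + 1) ^ 3 ≤ 2 * k ^ 3 := by
      have h1 : 10 * k ^ 2 ≤ k * k ^ 2 := Nat.mul_le_mul_right _ hk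
      have h2 : 10 * k ≤ k * k := Nat.mul_le_mul_right _ hk
      nlinarith [h1, h2]
    calc (k + 1) ^ 3 ≤ 2 * k ^ 3 := h
      _ < 2 * 2 ^ k := by omega
      _ = 2 ^ (k + 1) := by ring

theorem myF_unbounded (n : ℕ) : ∃ L : ℕ, n ≤ myF L := by
  by_contra hcon
  push_neg at hcon
  -- π(2^k) ≤ k * n by induction
  have hind : ∀ k : ℕ, Nat.primeCounting (2 ^ k) ≤ k * n := by
    intro k
    induction k with
    | zero => simp only [pow_zero, Nat.primeCounting, Nat.primeCounting']; simp; decide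
    | succ k ih =>
      have h1 := hcon (2 ^ (k + 1))
      have h2 : 2 ^ (k + 1) / 2 = 2 ^ k := by
        rw [pow_succ]; omega
      have h3 : Nat.primeCounting (2 ^ k) ≤ Nat.primeCounting (2 ^ (k + 1)) :=
        Nat.monotone_primeCounting (Nat.pow_le_pow_right (by norm_num) (by omega))
      unfold myF at h1
      rw [h2] at h1
      have hn1 : 1 ≤ n := by
        rcases Nat.eq_zero_or_pos n with h | h
        · exfalso; exact Nat.not_lt_zero _ (h ▸ hcon 0)
        · exact h
      calc Nat.primeCounting (2 ^ (k + 1)) ≤ Nat.primeCounting (2 ^ k) + n - 1 := by omega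
        _ ≤ k * n + n - 1 := by omega
        _ ≤ (k + 1) * n := by ring_nf; omega
  -- choose K = max n 10
  set K := max (n + 1) 10 with hK
  have hK10 : 10 ≤ K := le_max_right _ _
  have hKn : n + 1 ≤ K := le_max_left _ _
  have hK1 : 1 ≤ K := by omega
  -- 4^(2^(K-1)) ≤ (2^K)^(π(2^K)+1)
  have hlb := myLB (2 ^ (K - 1)) (Nat.pow_pos (by norm_num))
  have h2K : 2 * 2 ^ (K - 1) = 2 ^ K := by
    have hKe : K - 1 + 1 = K := by omega
    conv_rhs => rw [← hKe]
    rw [pow_succ]; ring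
  rw [h2K] at hlb
  have hexp : (4 : ℕ) ^ 2 ^ (K - 1) = 2 ^ 2 ^ K := by
    have : (4 : ℕ) = 2 ^ 2 := by norm_num
    rw [this, ← pow_mul, h2K]
  rw [hexp] at hlb
  have hpow : (2 : ℕ) ^ K ≤ K * (Nat.primeCounting (2 ^ K) + 1) := by
    have := hlb
    rw [← pow_mul] at this
    exact (Nat.pow_le_pow_iff_right (by norm_num)).mp this
  have hfin : (2 : ℕ) ^ K ≤ K * (K * n + 1) := by
    calc (2 : ℕ) ^ K ≤ K * (Nat.primeCounting (2 ^ K) + 1) := hpow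
      _ ≤ K * (K * n + 1) := Nat.mul_le_mul_left _ (by have := hind K; omega)
  have : K * (K * n + 1) ≤ K ^ 3 := by
    have h1 : K * K * (n + 1) ≤ K * K * K := Nat.mul_le_mul_left _ hKn
    have h2 : K ≤ K * K := Nat.le_mul_of_pos_left _ (by omega)
    nlinarith [h1, h2]
  have := cube_lt K hK10
  omega

theorem myIVT (n : ℕ) : ∀ b a : ℕ, a ≤ b → myF a ≤ n → n ≤ myF b →
    ∃ m, a ≤ m ∧ m ≤ b ∧ myF m = n := by
  intro b
  induction b with
  | zero =>
    intro a ha h1 h2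
    have haz : a = 0 := by omega
    subst haz
    exact ⟨0, le_refl _, le_refl _, by omega⟩
  | succ b ih =>
    intro a ha h1 h2
    by_cases h : myF (b + 1) = n
    · exact ⟨b + 1, ha, le_refl _, h⟩
    · have hlt : n < myF (b + 1) := by omega
      have hab : a ≤ b := by
        rcases Nat.lt_or_ge a (b + 1) with h' | h'
        · omega
        · have hae : a = b + 1 := by omega
          rw [hae] at h1; omega
      have hb : n ≤ myF b := by have := myF_step b; omega
      obtain ⟨m, hm1, hm2, hm3⟩ := ih a hab h1 hb
      exact ⟨m, hm1, by omega, hm3⟩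

theorem stmt_9 (n : ℕ) (hn : 1 ≤ n) :
    ∃ L : ℕ, IsLeast {L : ℕ | 0 < L ∧
      piR (L : ℝ) - piR ((L : ℝ) / 2) = n} L ∧ L.Prime := by
  have hset : ∀ L : ℕ, piR (L : ℝ) - piR ((L : ℝ) / 2) = myF L := by
    intro L
    unfold piR myF
    rw [show ((2 : ℝ)) = ((2 : ℕ) : ℝ) by norm_num, Nat.floor_div_natCast,
      Nat.floor_natCast]
  have hF2 : myF 2 = 1 := by decide
  have hF1 : myF 1 = 0 := by decide
  have hF0 : myF 0 = 0 := by decide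
  -- existence of an element of the set
  obtain ⟨L0, hL0⟩ := myF_unbounded n
  have hL02 : 2 ≤ L0 := by
    by_contra h
    interval_cases L0 <;> omega
  obtain ⟨m, hm2, _, hm⟩ := myIVT n L0 2 hL02 (by omega) hL0
  set S : Set ℕ := {L : ℕ | 0 < L ∧ piR (L : ℝ) - piR ((L : ℝ) / 2) = n} with hS
  have hmem : ∀ L : ℕ, L ∈ S ↔ 0 < L ∧ myF L = n := by
    intro L; rw [hS]; simp only [Set.mem_setOf_eq, hset]
  have hne : S.Nonempty := ⟨m, (hmem m).mpr ⟨by omega, hm⟩⟩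
  set L := sInf S with hL
  have hmemL : L ∈ S := Nat.sInf_mem hne
  have hleast : IsLeast S L := ⟨hmemL, fun x hx => Nat.sInf_le hx⟩
  refine ⟨L, hleast, ?_⟩
  obtain ⟨hLpos, hLval⟩ := (hmem L).mp hmemL
  have hL2 : 2 ≤ L := by
    rcases Nat.lt_or_ge L 2 with h | h
    · interval_cases L <;> omega
    · exact h
  by_contra hnp
  have hL3 : 3 ≤ L := by
    rcases Nat.lt_or_ge L 3 with h | h
    · have : L = 2 := by omega
      exact absurd (this ▸ Nat.prime_two) hnp
    · exact h
  have hpi : Nat.primeCounting L = Nat.primeCounting (L - 1) := by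
    have h : L - 1 + 1 = L := by omega
    unfold Nat.primeCounting Nat.primeCounting'
    rw [h, Nat.count_succ]
    simp [hnp]
  have hmono : Nat.primeCounting ((L - 1) / 2) ≤ Nat.primeCounting (L / 2) :=
    Nat.monotone_primeCounting (by omega)
  have hge : n ≤ myF (L - 1) := by
    unfold myF at hLval ⊢
    omega
  obtain ⟨m', hm'1, hm'2, hm'3⟩ := myIVT n (L - 1) 2 (by omega) (by omega) hge
  have : L ≤ m' := Nat.sInf_le ((hmem m').mpr ⟨by omega, hm'3⟩)
  omega
end

section
/- Let p = p_n be a prime with n ≥ 3 such that all integers strictly between p_{n-1}/2 and p_n/2 are composite. If p_m < p/2 < p_{m+1}, then the interval (2·p_m, p) contains a prime. -/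
theorem stmt_11 (n m : ℕ) (hn : 3 ≤ n)
    (hcomp : ∀ q : ℕ, (p (n - 1) : ℝ) / 2 < (q : ℝ) → (q : ℝ) < (p n : ℝ) / 2 →
      1 < q ∧ ¬ q.Prime)
    (h1 : (p m : ℝ) < (p n : ℝ) / 2) (h2 : (p n : ℝ) / 2 < (p (m + 1) : ℝ)) :
    ∃ q : ℕ, q.Prime ∧ 2 * p m < q ∧ q < p n := by
  refine ⟨p (n - 1), Nat.prime_nth_prime _, ?_, ?_⟩
  · -- 2 * p m < p (n-1)
    by_contra h
    push_neg at h
    have hpm : (p m).Prime := Nat.prime_nth_prime _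
    have hr : ((p (n - 1) : ℝ)) / 2 ≤ (p m : ℝ) := by
      rw [div_le_iff₀ (by norm_num)]
      exact_mod_cast by linarith [(by exact_mod_cast Nat.cast_le.mpr h : (p (n-1) : ℝ) ≤ (2 * p m : ℕ))]
    rcases lt_or_eq_of_le hr with hlt | heq
    · exact (hcomp (p m) hlt h1).2 hpm
    · -- p (n-1) = 2 * p m
      have : p (n - 1) = 2 * p m := by
        have : (p (n - 1) : ℝ) = 2 * (p m : ℝ) := by linarith
        exact_mod_cast this
      have hpn1 : (p (n - 1)).Prime := Nat.prime_nth_prime _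
      rw [this] at hpn1
      have h2d : 2 ∣ 2 * p m := ⟨p m, rfl⟩
      have := (Nat.Prime.eq_one_or_self_of_dvd hpn1 2 h2d)
      have hpm2 := hpm.two_le
      omega
  · -- p (n-1) < p n
    exact (Nat.nth_lt_nth Nat.infinite_setOf_prime (k := n - 1 - 1) (n := n - 1)).mpr (by omega)
end

section
/- Within a maximal interval of the form (2·p_k, 2·p_{k+1}) containing j ≥ 1 primes, every prime in the interval except the largest is an R-prime, and every prime except the smallest is an L-prime. -/
lemma count_succ_nth (m : ℕ) :
    Nat.count Nat.Prime (Nat.nth Nat.Prime m + 1) = m + 1 := by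
  rw [Nat.count_succ, Nat.count_nth_of_infinite Nat.infinite_setOf_prime]
  simp [Nat.prime_nth_prime]

lemma pi_eq_of_mem (k x : ℕ) (hk : 1 ≤ k) (h1 : Nat.nth Nat.Prime (k - 1) ≤ x)
    (h2 : x < Nat.nth Nat.Prime k) : Nat.primeCounting x = k := by
  have hinf := Nat.infinite_setOf_prime
  have hle : Nat.primeCounting' (Nat.nth Nat.Prime (k-1) + 1) ≤ Nat.primeCounting x :=
    Nat.monotone_primeCounting' (by omega)
  have hge : Nat.primeCounting x ≤ Nat.primeCounting' (Nat.nth Nat.Prime k) :=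
    Nat.monotone_primeCounting' (by omega)
  have h3 : Nat.primeCounting' (Nat.nth Nat.Prime k) = k := Nat.primeCounting'_nth_eq k
  have h4 : Nat.primeCounting' (Nat.nth Nat.Prime (k-1) + 1) = k := by
    unfold Nat.primeCounting'
    rw [count_succ_nth]; omega
  omega

theorem stmt_15 (k n : ℕ) (hk : 1 ≤ k) (hn : 1 < n)
    (hlo : 2 * p k < p n) (hhi : p n < 2 * p (k + 1)) :
    ((∃ q : ℕ, q.Prime ∧ p n < q ∧ q < 2 * p (k + 1)) →
      Nat.primeCounting (p n / 2) = Nat.primeCounting (p (n + 1) / 2)) ∧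
    ((∃ q : ℕ, q.Prime ∧ 2 * p k < q ∧ q < p n) →
      Nat.primeCounting (p (n - 1) / 2) = Nat.primeCounting (p n / 2)) := by
  have hinf := Nat.infinite_setOf_prime
  have hk1 : p (k+1) = Nat.nth Nat.Prime k := by simp [p]
  have hmem : ∀ m : ℕ, 2 * p k < m → m < 2 * p (k+1) → Nat.primeCounting (m / 2) = k := by
    intro m h1 h2
    apply pi_eq_of_mem k _ hk
    · unfold p at h1; omega
    · rw [hk1] at h2; omega
  constructor
  · rintro ⟨q, hq, hq1, hq2⟩
    -- p (n+1) ≤ q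
    have hcount : n ≤ Nat.count Nat.Prime q := by
      have : Nat.count Nat.Prime (Nat.nth Nat.Prime (n-1) + 1) ≤ Nat.count Nat.Prime q :=
        Nat.count_monotone _ (by unfold p at hq1; omega)
      rw [count_succ_nth] at this; omega
    have hle : p (n+1) ≤ q := by
      have h := (Nat.nth_le_nth (p := Nat.Prime) hinf).mpr hcount
      rwa [Nat.nth_count hq] at h
      -- p (n+1) = nth n
    have hpn1 : p (n+1) = Nat.nth Nat.Prime n := by simp [p]
    rw [hpn1] at hle
    have hgt : p n < p (n+1) := by
      unfold p
      exact (Nat.nth_lt_nth hinf).mpr (by omega)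
    rw [hmem _ hlo hhi, hmem (p (n+1)) (by omega) (by rw [hpn1]; omega)]
  · rintro ⟨q, hq, hq1, hq2⟩
    have hcount : Nat.count Nat.Prime q ≤ n - 2 := by
      have hqe : Nat.nth Nat.Prime (Nat.count Nat.Prime q) = q := Nat.nth_count hq
      have : Nat.nth Nat.Prime (Nat.count Nat.Prime q) < Nat.nth Nat.Prime (n-1) := by
        rw [hqe]; unfold p at hq2; omega
      have := (Nat.nth_lt_nth hinf).mp this
      omega
    have hle : q ≤ p (n-1) := by
      have h := (Nat.nth_le_nth (p := Nat.Prime) hinf).mpr hcount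
      rw [Nat.nth_count hq] at h
      unfold p
      have : n - 1 - 1 = n - 2 := by omega
      rw [this]; exact h
    have hlt : p (n-1) < p n := by
      unfold p
      exact (Nat.nth_lt_nth hinf).mpr (by omega)
    rw [hmem (p (n-1)) (by omega) (by omega), hmem _ hlo hhi]
end
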